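/- Every semigroup that has neither N_2^ℓ nor N_2^r among its divisors and contains neither the 2-element right zero semigroup R_2 nor the 2-element left zero semigroup L_2 as a subsemigroup is a semigroup with central idempotents, i.e., es = se for every idempotent e and every element s. -/

import Mathlib

/-- The 3-element semigroup N₂ˡ = {e,a,0}: e²=e, ea=a, other products 0. -/
inductive N2l | e | a | z
  deriving DecidableEq

instance : Fintype N2l := Fintype.ofList [.e, .a, .z] (by intro x; cases x <;> simp)

instance : Mul N2l :=
  ⟨fun x y => match x, y with
    | .e, .e => .e
    | .e, .a => .a
    | _, _ => .z⟩

instance : Semigroup N2l := ⟨by decide⟩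

/-- The 3-element semigroup N₂ʳ = {e,a,0}: e²=e, ae=a, other products 0. -/
inductive N2r | e | a | z
  deriving DecidableEq

instance : Fintype N2r := Fintype.ofList [.e, .a, .z] (by intro x; cases x <;> simp)

instance : Mul N2r :=
  ⟨fun x y => match x, y with
    | .e, .e => .e
    | .a, .e => .a
    | _, _ => .z⟩

instance : Semigroup N2r := ⟨by decide⟩

/-- The 2-element right zero semigroup. -/
inductive R2 | x | y
  deriving DecidableEq

instance : Fintype R2 := Fintype.ofList [.x, .y] (by intro x; cases x <;> simp)

instance : Mul R2 := ⟨fun _ b => b⟩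

instance : Semigroup R2 := ⟨fun _ _ _ => rfl⟩

/-- The 2-element left zero semigroup. -/
inductive L2 | x | y
  deriving DecidableEq

instance : Fintype L2 := Fintype.ofList [.x, .y] (by intro x; cases x <;> simp)

instance : Mul L2 := ⟨fun a _ => a⟩

instance : Semigroup L2 := ⟨fun _ _ _ => rfl⟩

/-- `D` is a divisor of `S`: a homomorphic image of a subsemigroup of `S`. -/
def IsDivisorOf (D S : Type*) [Semigroup D] [Semigroup S] : Prop :=
  ∃ (T : Subsemigroup S) (f : T →ₙ* D), Function.Surjective f

/-!
Let `e` be idempotent. The heart of the proof is that `e * a = a` forces `a * e = a`; applied in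
`Sᵐᵒᵖ` this gives the converse, and the two applied to `e * s` and `s * e` give
`e * s = e * s * e = s * e`.

So suppose `e * a = a` but `a * e ≠ a`. Then `e` and `a` generate `{e} ∪ ⟨a⟩ ∪ ⟨a⟩ e`, on
which `e` acts as a left identity. If `a` had a right identity `x` in `⟨a⟩`, then `x` would be
idempotent and `{x, x * e}` a copy of `R₂`. Otherwise no product except `e * e` and `e * a`
equals `e` or `a`, so sending everything but `e` and `a` to `0` is a morphism onto `N₂ˡ`.
-/

open Subsemigroup MulOpposite

def MulEmbeds (D S : Type*) [Mul D] [Mul S] : Prop :=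
  ∃ f : D →ₙ* S, Function.Injective f

section Divisors

variable {D D' S : Type*} [Semigroup D] [Semigroup D'] [Semigroup S]

theorem IsDivisorOf.of_surjective (h : IsDivisorOf D S) (g : D →ₙ* D')
    (hg : Function.Surjective g) : IsDivisorOf D' S :=
  let ⟨T, f, hf⟩ := h
  ⟨T, g.comp f, hg.comp hf⟩

theorem IsDivisorOf.of_mulOpposite (h : IsDivisorOf D Sᵐᵒᵖ) : IsDivisorOf Dᵐᵒᵖ S := by
  obtain ⟨T, f, hf⟩ := h
  refine ⟨T.unop, ⟨fun t => op (f ⟨op t, t.2⟩), fun x y =>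
    congrArg op (f.map_mul ⟨op y, y.2⟩ ⟨op x, x.2⟩)⟩, fun d => ?_⟩
  obtain ⟨t, ht⟩ := hf d.unop
  exact ⟨⟨t.1.unop, t.2⟩, congrArg op ht⟩

theorem MulEmbeds.trans (h : MulEmbeds D D') (h' : MulEmbeds D' S) : MulEmbeds D S :=
  let ⟨f, hf⟩ := h
  let ⟨g, hg⟩ := h'
  ⟨g.comp f, hg.comp hf⟩

theorem MulEmbeds.of_mulOpposite (h : MulEmbeds D Sᵐᵒᵖ) : MulEmbeds Dᵐᵒᵖ S :=
  let ⟨f, hf⟩ := h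
  ⟨⟨fun d => (f d.unop).unop, fun s t => congrArg unop (f.map_mul t.unop s.unop)⟩,
    unop_injective.comp (hf.comp unop_injective)⟩

end Divisors

def N2l.opMulHomN2r : N2lᵐᵒᵖ →ₙ* N2r where
  toFun x := match x.unop with | .e => .e | .a => .a | .z => .z
  map_mul' := by rintro ⟨s⟩ ⟨t⟩; cases s <;> cases t <;> rfl

theorem N2l.opMulHomN2r_surjective : Function.Surjective N2l.opMulHomN2r := by
  rintro (_ | _ | _)
  exacts [⟨op .e, rfl⟩, ⟨op .a, rfl⟩, ⟨op .z, rfl⟩]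

def L2.mulHomOpR2 : L2 →ₙ* R2ᵐᵒᵖ where
  toFun t := op (match t with | .x => .x | .y => .y)
  map_mul' _ _ := rfl

theorem L2.mulHomOpR2_injective : Function.Injective L2.mulHomOpR2 := by decide

section Semigroup

variable {S : Type*} [Semigroup S] {a e g u x y : S}

theorem commute_of_mem_closure_singleton (hx : x ∈ closure {a}) : Commute a x := by
  induction hx using closure_induction with
  | mem x hx => rw [Set.mem_singleton_iff.mp hx]
  | mul x y _ _ hx hy => exact hx.mul_right hy

theorem mul_eq_right_of_mem_closure_singleton (hea : e * a = a) (hx : x ∈ closure {a}) :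
    e * x = x := by
  induction hx using closure_induction with
  | mem x hx => rwa [Set.mem_singleton_iff.mp hx]
  | mul x y _ _ hx _ => rw [← mul_assoc, hx]

theorem mul_eq_left_of_mem_closure_singleton (hau : a * u = a) (hx : x ∈ closure {a}) :
    x * u = x := by
  induction hx using closure_induction with
  | mem x hx => rwa [Set.mem_singleton_iff.mp hx]
  | mul x y _ _ _ hy => rw [mul_assoc, hy]

theorem exists_mul_eq_mul_of_mem_closure_singleton (hx : x ∈ closure {a})
    (hy : y ∈ closure {a}) : ∃ z ∈ closure {a}, x * y = a * z := by
  induction hx using closure_induction generalizing y with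
  | mem x hx => exact ⟨y, hy, by rw [Set.mem_singleton_iff.mp hx]⟩
  | mul x x' _ hx' hx _ =>
    obtain ⟨z, hz, h⟩ := hx (mul_mem hx' hy)
    exact ⟨z, hz, by rw [mul_assoc, h]⟩


theorem mulEmbeds_R2_of_mul_eq (hgg : g * g = g) (hgu : g * u = u) (hug : u * g = g)
    (huu : u * u = u) (hne : g ≠ u) : MulEmbeds R2 S := by
  refine ⟨⟨fun t => match t with | .x => g | .y => u, ?_⟩, ?_⟩
  · rintro (_ | _) (_ | _)
    exacts [hgg.symm, hgu.symm, hug.symm, huu.symm]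
  · rintro (_ | _) (_ | _) h
    exacts [rfl, absurd h hne, absurd h.symm hne, rfl]

/-- The right identity `x` of `a` is idempotent, and `{x, x * e}` is a right zero semigroup
unless `x * e = x`. -/
theorem mul_eq_left_of_mem_closure_singleton_of_mul_eq_left (hR : ¬ MulEmbeds R2 S)
    (hea : e * a = a) (hx : x ∈ closure {a}) (hax : a * x = a) : a * e = a := by
  have hxx : x * x = x := mul_eq_left_of_mem_closure_singleton hax hx
  have hex : e * x = x := mul_eq_right_of_mem_closure_singleton hea hx
  by_contra hne
  refine hR (mulEmbeds_R2_of_mul_eq (u := x * e) hxx ?_ ?_ ?_ fun h => hne ?_)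
  · rw [← mul_assoc, hxx]
  · rw [mul_assoc, hex, hxx]
  · rw [mul_assoc, ← mul_assoc e, hex, ← mul_assoc, hxx]
  · calc a * e = a * x * e := by rw [hax]
      _ = a * x := by rw [mul_assoc, ← h]
      _ = a := hax

theorem isDivisorOf_N2l_of_subsemigroup (T : Subsemigroup S) (he : e ∈ T) (ha : a ∈ T)
    (hae : a ≠ e) (hid : ∀ y ∈ T, e * y = y)
    (hT : ∀ x ∈ T, ∀ y ∈ T, x ≠ e → x * y ≠ e ∧ x * y ≠ a) :
    IsDivisorOf N2l S := by
  classical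
  let f : S → N2l := fun s => if s = e then .e else if s = a then .a else .z
  have hfe : f e = .e := if_pos rfl
  have hfa : f a = .a := by simp [f, hae]
  have hfz {s : S} (hse : s ≠ e) (hsa : s ≠ a) : f s = .z := by simp [f, hse, hsa]
  refine ⟨T, ⟨fun t => f t, ?_⟩, ?_⟩
  · rintro ⟨x, hx⟩ ⟨y, hy⟩
    change f (x * y) = f x * f y
    by_cases hxe : x = e
    · subst hxe
      rw [hid y hy, hfe]
      cases f y <;> rfl
    · obtain ⟨hxye, hxya⟩ := hT x hx y hy hxe
      rw [hfz hxye hxya]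
      by_cases hxa : x = a
      · rw [hxa, hfa]; rfl
      · rw [hfz hxe hxa]; rfl
  · rintro (_ | _ | _)
    · exact ⟨⟨e, he⟩, hfe⟩
    · exact ⟨⟨a, ha⟩, hfa⟩
    · obtain ⟨hae', haa⟩ := hT a ha a ha hae
      exact ⟨⟨a * a, mul_mem ha ha⟩, hfz hae' haa⟩


theorem mul_eq_right_of_mem_insert_closure_singleton (he : IsIdempotentElem e) (hea : e * a = a)
    (hy : y = e ∨ y ∈ closure {a} ∨ ∃ v ∈ closure {a}, y = v * e) : e * y = y := by
  rcases hy with rfl | hy | ⟨v, hv, rfl⟩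
  · exact he
  · exact mul_eq_right_of_mem_closure_singleton hea hy
  · rw [← mul_assoc, mul_eq_right_of_mem_closure_singleton hea hv]

theorem exists_mul_eq_of_mem_insert_closure_singleton (he : IsIdempotentElem e)
    (hea : e * a = a) (hx : x ∈ closure {a} ∨ ∃ w ∈ closure {a}, x = w * e)
    (hy : y = e ∨ y ∈ closure {a} ∨ ∃ v ∈ closure {a}, y = v * e) :
    (∃ w ∈ closure {a}, ∃ v ∈ closure {a}, x * y = w * v) ∨
      ∃ w ∈ closure {a}, x * y = w * e := by
  rcases hx with hx | ⟨w, hw, rfl⟩ <;> rcases hy with rfl | hy | ⟨v, hv, rfl⟩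
  · exact .inr ⟨x, hx, rfl⟩
  · exact .inl ⟨x, hx, y, hy, rfl⟩
  · exact .inr ⟨x * v, mul_mem hx hv, (mul_assoc _ _ _).symm⟩
  · exact .inr ⟨w, hw, by rw [mul_assoc, he.eq]⟩
  · exact .inl ⟨w, hw, y, hy, by rw [mul_assoc, mul_eq_right_of_mem_closure_singleton hea hy]⟩
  · refine .inr ⟨w * v, mul_mem hw hv, ?_⟩
    rw [mul_assoc, ← mul_assoc e, mul_eq_right_of_mem_closure_singleton hea hv, mul_assoc]

theorem eq_or_mem_closure_singleton_of_mem_closure_pair (he : IsIdempotentElem e)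
    (hea : e * a = a) (hx : x ∈ closure {e, a}) :
    x = e ∨ x ∈ closure {a} ∨ ∃ w ∈ closure {a}, x = w * e := by
  induction hx using closure_induction with
  | mem x hx =>
    rcases hx with rfl | rfl
    exacts [.inl rfl, .inr (.inl (subset_closure rfl))]
  | mul x y _ _ hx hy =>
    rcases hx with rfl | hx
    · rwa [mul_eq_right_of_mem_insert_closure_singleton he hea hy]
    · rcases exists_mul_eq_of_mem_insert_closure_singleton he hea hx hy with
        ⟨w, hw, v, hv, h⟩ | h
      exacts [.inr (.inl (h ▸ mul_mem hw hv)), .inr (.inr h)]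


theorem mul_eq_left_of_mul_eq_right (hN : ¬ IsDivisorOf N2l S) (hR : ¬ MulEmbeds R2 S)
    (he : IsIdempotentElem e) (hea : e * a = a) : a * e = a := by
  by_contra hae
  have hA : ∀ w ∈ closure {a}, w ≠ e := fun w hw hwe =>
    hae ((hwe ▸ commute_of_mem_closure_singleton hw).eq.trans hea)
  have hAe : ∀ w ∈ closure {a}, w * e ≠ e ∧ w * e ≠ a := fun w hw =>
    ⟨fun h => hae <| mul_eq_left_of_mem_closure_singleton_of_mul_eq_left hR hea hw <|
        calc a * w = w * a := (commute_of_mem_closure_singleton hw).eq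
          _ = w * e * a := by rw [mul_assoc, hea]
          _ = a := by rw [h, hea],
      fun h => hae <|
        calc a * e = w * e * e := by rw [h]
          _ = a := by rw [mul_assoc, he.eq, h]⟩
  have hAA : ∀ w ∈ closure {a}, ∀ v ∈ closure {a}, w * v ≠ e ∧ w * v ≠ a :=
    fun w hw v hv => ⟨hA _ (mul_mem hw hv), fun h => by
      obtain ⟨z, hz, hwv⟩ := exists_mul_eq_mul_of_mem_closure_singleton hw hv
      exact hae (mul_eq_left_of_mem_closure_singleton_of_mul_eq_left hR hea hz (hwv ▸ h))⟩
  refine hN <| isDivisorOf_N2l_of_subsemigroup (closure {e, a}) (subset_closure (.inl rfl))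
    (subset_closure (.inr rfl)) (fun h => hae (by rw [h, he.eq]))
    (fun y hy => mul_eq_right_of_mem_insert_closure_singleton he hea
      (eq_or_mem_closure_singleton_of_mem_closure_pair he hea hy)) ?_
  intro x hx y hy hxe
  rcases exists_mul_eq_of_mem_insert_closure_singleton he hea
    ((eq_or_mem_closure_singleton_of_mem_closure_pair he hea hx).resolve_left hxe)
    (eq_or_mem_closure_singleton_of_mem_closure_pair he hea hy) with
    ⟨w, hw, v, hv, h⟩ | ⟨w, hw, h⟩ <;> rw [h]
  exacts [hAA w hw v hv, hAe w hw]

theorem mul_eq_right_of_mul_eq_left (hN : ¬ IsDivisorOf N2r S) (hL : ¬ MulEmbeds L2 S)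
    (he : IsIdempotentElem e) (hae : a * e = a) : e * a = a :=
  op_injective <| mul_eq_left_of_mul_eq_right (S := Sᵐᵒᵖ)
    (fun h => hN (h.of_mulOpposite.of_surjective _ N2l.opMulHomN2r_surjective))
    (fun h => hL (MulEmbeds.trans ⟨_, L2.mulHomOpR2_injective⟩ h.of_mulOpposite))
    (congrArg op he) (congrArg op hae)

end Semigroup

/-- A semigroup with neither N₂ˡ nor N₂ʳ among its divisors and containing
neither R₂ nor L₂ as a subsemigroup has central idempotents. -/
theorem stmt_9 (S : Type*) [Semigroup S]
    (h1 : ¬ IsDivisorOf N2l S) (h2 : ¬ IsDivisorOf N2r S)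
    (h3 : ¬ ∃ f : R2 →ₙ* S, Function.Injective f)
    (h4 : ¬ ∃ f : L2 →ₙ* S, Function.Injective f) :
    ∀ e s : S, e * e = e → e * s = s * e := by
  intro e s he
  have hese : e * s * e = e * s :=
    mul_eq_left_of_mul_eq_right h1 h3 he (by rw [← mul_assoc, he])
  have hese' : e * (s * e) = s * e :=
    mul_eq_right_of_mul_eq_left h2 h4 he (by rw [mul_assoc, he])
  rw [← hese', ← mul_assoc, hese]
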